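/- arXiv:1110.4830 — 2 statements merged into one kernel-verified Lean document; each statement's English description precedes it below -/
import Mathlib

section
/- Let q ≥ 2, h ≥ 1 and u ≥ 1 be integers, and let m₀, m₁, m₂, m₃ be integers satisfying q^(u-1) ≤ m₀, m₂, m₃ < q^u and 1 ≤ m₁ < q^u/(hq(6q)^h). Write t(x) = m₃x³ + m₂x² − m₁x + m₀ and let c₀, c₁, …, c_{3h} be the (integer) coefficients of t(x)^h. Then c_i > 0 for every i ∈ {0, 2, 3, …, 3h} and c₁ < 0. -/
/-! Write `t = s - m₁ X` with `s = m₃ X³ + m₂ X² + m₀`. Every coefficient of `s ^ h` at `0` and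
at `2, …, 3h` is at least `(q ^ (u - 1)) ^ h`. From `t ^ h - s ^ h = (t - s) * ∑ tʲ s^(h-1-j)`, the
coefficients of `t ^ h - s ^ h` are bounded in absolute value by the value at `1` of
`h (s + m₁ X) ^ (h - 1) m₁ X`, that is by `h (m₀ + m₂ + m₃ + m₁) ^ (h - 1) m₁`, and the bound on
`m₁` makes this smaller. The coefficient of `X` in `t ^ h` is `h m₀ ^ (h - 1) (-m₁)`. -/

open Polynomial Finset

namespace Polynomial

lemma coeff_one_pow {R : Type*} [CommSemiring R] (p : R[X]) (n : ℕ) :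
    (p ^ n).coeff 1 = n * p.coeff 0 ^ (n - 1) * p.coeff 1 := by
  rw [← coeff_coe, coe_pow, PowerSeries.coeff_one_pow, coeff_coe, constantCoeff_coe]
  ring

variable {R : Type*} [CommRing R] [LinearOrder R]

def Majorizes (P p : R[X]) : Prop := ∀ i, |p.coeff i| ≤ P.coeff i

lemma Majorizes.mono {P Q p : R[X]} (h : Majorizes P p) (hPQ : ∀ i, P.coeff i ≤ Q.coeff i) :
    Majorizes Q p :=
  fun i => (h i).trans (hPQ i)

lemma Majorizes.neg {P p : R[X]} (h : Majorizes P p) : Majorizes P (-p) := fun i => by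
  simpa only [coeff_neg, abs_neg] using h i

variable [IsStrictOrderedRing R]

namespace Majorizes

variable {P Q D p q : R[X]}

lemma coeff_nonneg (h : Majorizes P p) (i : ℕ) : 0 ≤ P.coeff i :=
  (abs_nonneg _).trans (h i)

lemma self_of_coeff_nonneg (h : ∀ i, 0 ≤ P.coeff i) : Majorizes P P :=
  fun i => (abs_of_nonneg (h i)).le

lemma add (hp : Majorizes P p) (hq : Majorizes Q q) : Majorizes (P + Q) (p + q) := fun i => by
  simpa only [coeff_add] using (abs_add_le _ _).trans (add_le_add (hp i) (hq i))

lemma sum {ι : Type*} (s : Finset ι) {P p : ι → R[X]} (h : ∀ j ∈ s, Majorizes (P j) (p j)) :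
    Majorizes (∑ j ∈ s, P j) (∑ j ∈ s, p j) := fun i => by
  simp only [finsetSum_coeff]
  exact (abs_sum_le_sum_abs _ _).trans (sum_le_sum fun j hj => h j hj i)

lemma mul (hp : Majorizes P p) (hq : Majorizes Q q) : Majorizes (P * Q) (p * q) := fun i => by
  simp only [coeff_mul]
  refine (abs_sum_le_sum_abs _ _).trans (sum_le_sum fun x _ => ?_)
  rw [abs_mul]
  exact mul_le_mul (hp _) (hq _) (abs_nonneg _) (hp.coeff_nonneg _)

lemma pow (hp : Majorizes P p) (n : ℕ) : Majorizes (P ^ n) (p ^ n) := by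
  induction n with
  | zero =>
    simpa using self_of_coeff_nonneg (P := (1 : R[X])) fun i => by
      rw [coeff_one]; split_ifs <;> norm_num
  | succ n ih => simpa only [pow_succ] using ih.mul hp

lemma pow_sub_pow (hp : Majorizes P p) (hq : Majorizes P q) (hd : Majorizes D (p - q)) (n : ℕ) :
    Majorizes ((n : R[X]) * P ^ (n - 1) * D) (p ^ n - q ^ n) := by
  rw [← geom_sum₂_mul]
  refine Majorizes.mul ?_ hd
  have hterm : ∀ i ∈ range n, Majorizes (P ^ (n - 1)) (p ^ i * q ^ (n - 1 - i)) := fun i hi => by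
    have hi : i + (n - 1 - i) = n - 1 := by have := mem_range.1 hi; omega
    simpa only [← pow_add, hi] using (hp.pow i).mul (hq.pow (n - 1 - i))
  simpa only [sum_const, card_range, nsmul_eq_mul] using Majorizes.sum _ hterm

lemma abs_coeff_le_eval_one (h : Majorizes P p) (i : ℕ) : |p.coeff i| ≤ P.eval 1 := by
  refine (h i).trans ?_
  rw [eval_eq_sum_range' (n := max (P.natDegree + 1) (i + 1)) (by omega)]
  simpa using single_le_sum (fun j _ => h.coeff_nonneg j) (mem_range.2 (by omega : i < _))

end Majorizes

lemma coeff_mul_coeff_le_coeff_mul {p q : R[X]} (hp : ∀ i, 0 ≤ p.coeff i)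
    (hq : ∀ i, 0 ≤ q.coeff i) (a b : ℕ) : p.coeff a * q.coeff b ≤ (p * q).coeff (a + b) := by
  rw [coeff_mul]
  exact single_le_sum (f := fun x : ℕ × ℕ => p.coeff x.1 * q.coeff x.2)
    (fun x _ => mul_nonneg (hp _) (hq _)) (mem_antidiagonal.2 rfl : (a, b) ∈ antidiagonal (a + b))

lemma pow_le_coeff_pow_of_le_coeff_zero_two_three {s : R[X]} {L : R} (hs : ∀ i, 0 ≤ s.coeff i)
    (hL : 0 ≤ L) (h0 : L ≤ s.coeff 0) (h2 : L ≤ s.coeff 2) (h3 : L ≤ s.coeff 3) (n : ℕ) {i : ℕ}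
    (hi : i = 0 ∨ 2 ≤ i ∧ i ≤ 3 * n) : L ^ n ≤ (s ^ n).coeff i := by
  induction n generalizing i with
  | zero => rcases hi with rfl | hi <;> simp_all
  | succ n ih =>
    have hpow := fun i => ((Majorizes.self_of_coeff_nonneg hs).pow n).coeff_nonneg i
    have step : ∀ j, L ≤ s.coeff j → j ≤ i → (i - j = 0 ∨ 2 ≤ i - j ∧ i - j ≤ 3 * n) →
        L ^ (n + 1) ≤ (s ^ (n + 1)).coeff i := fun j hj hji hgood => calc
      L ^ (n + 1) = L ^ n * L := pow_succ L n
      _ ≤ (s ^ n).coeff (i - j) * s.coeff j := mul_le_mul (ih hgood) hj hL (hpow _)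
      _ ≤ (s ^ (n + 1)).coeff i := by
        simpa only [pow_succ, Nat.sub_add_cancel hji] using
          coeff_mul_coeff_le_coeff_mul hpow hs (i - j) j
    rcases hi with rfl | ⟨hi2, hi⟩
    · exact step 0 h0 le_rfl (Or.inl rfl)
    · obtain rfl | rfl | rfl | hi5 : i = 2 ∨ i = 3 ∨ i = 4 ∨ 5 ≤ i := by omega
      · exact step 2 h2 le_rfl (Or.inl rfl)
      · exact step 3 h3 le_rfl (Or.inl rfl)
      · exact step 2 h2 (by omega) (Or.inr ⟨le_rfl, by omega⟩)
      · exact step 3 h3 (by omega) (Or.inr ⟨by omega, by omega⟩)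

lemma majorizes_sub_C_mul_X_pow_sub_pow {s : R[X]} {a : R} (hs : ∀ i, 0 ≤ s.coeff i)
    (ha : 0 ≤ a) (n : ℕ) :
    Majorizes ((n : R[X]) * (s + C a * X) ^ (n - 1) * (C a * X)) ((s - C a * X) ^ n - s ^ n) := by
  have hX : ∀ i, 0 ≤ (C a * X).coeff i := fun i => by
    rw [coeff_C_mul_X]; split_ifs <;> simp [ha]
  have hT : Majorizes (s + C a * X) (s - C a * X) := by
    simpa only [sub_eq_add_neg] using
      (Majorizes.self_of_coeff_nonneg hs).add (Majorizes.self_of_coeff_nonneg hX).neg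
  have hsT : Majorizes (s + C a * X) s := (Majorizes.self_of_coeff_nonneg hs).mono fun i => by
    simpa only [coeff_add] using le_add_of_nonneg_right (hX i)
  have hd : Majorizes (C a * X) (s - C a * X - s) := by
    simpa only [sub_sub_cancel_left] using (Majorizes.self_of_coeff_nonneg hX).neg
  exact hT.pow_sub_pow hsT hd n

end Polynomial

lemma natCast_mul_pow_mul_lt {q h u : ℕ} (hq : 0 < q) (hh : 1 ≤ h) (hu : 1 ≤ u) {m S : ℤ}
    (hm : 0 ≤ m) (hS : 0 ≤ S) (hSq : S ≤ 3 * q ^ u) (hmq : m * (h * q * (6 * q) ^ h) < q ^ u) :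
    h * (S + m) ^ (h - 1) * m < ((q : ℤ) ^ (u - 1)) ^ h := by
  set Q : ℤ := (q : ℤ) ^ u
  have hq : (1 : ℤ) ≤ q := by exact_mod_cast hq
  have hQ : Q = (q : ℤ) ^ (u - 1) * q := by rw [← pow_succ, Nat.sub_add_cancel hu]
  have hmQ : m ≤ Q := by
    refine (le_mul_of_one_le_right hm ?_).trans hmq.le
    exact one_le_mul_of_one_le_of_one_le (one_le_mul_of_one_le_of_one_le (by exact_mod_cast hh) hq)
      (one_le_pow₀ (by linarith))
  have h46 : (4 : ℤ) ^ (h - 1) * q ^ h ≤ q * (6 * q) ^ h := calc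
    (4 : ℤ) ^ (h - 1) * q ^ h ≤ 6 ^ h * q ^ h := by
      gcongr
      exact (pow_le_pow_left₀ (by norm_num) (by norm_num) _).trans
        (pow_le_pow_right₀ (by norm_num) (by omega))
    _ ≤ q * (6 * q) ^ h := by rw [mul_pow]; exact le_mul_of_one_le_left (by positivity) hq
  refine lt_of_mul_lt_mul_right ?_ (by positivity : (0 : ℤ) ≤ q ^ h)
  calc h * (S + m) ^ (h - 1) * m * q ^ h ≤ h * (4 * Q) ^ (h - 1) * m * q ^ h := by
        gcongr; linarith
    _ = m * h * (4 ^ (h - 1) * q ^ h) * Q ^ (h - 1) := by ring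
    _ ≤ m * h * (q * (6 * q) ^ h) * Q ^ (h - 1) := by gcongr
    _ = m * (h * q * (6 * q) ^ h) * Q ^ (h - 1) := by ring
    _ < Q * Q ^ (h - 1) := by gcongr
    _ = ((q : ℤ) ^ (u - 1)) ^ h * q ^ h := by
        rw [← pow_succ', Nat.sub_add_cancel hh, hQ, mul_pow]

theorem coefficients_of_t_pow_h_integer
    (q h u : ℕ) (hq : 2 ≤ q) (hh : 1 ≤ h) (hu : 1 ≤ u)
    (m₀ m₁ m₂ m₃ : ℤ)
    (hm₀ : (q : ℤ) ^ (u - 1) ≤ m₀) (hm₀' : m₀ < (q : ℤ) ^ u)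
    (hm₂ : (q : ℤ) ^ (u - 1) ≤ m₂) (hm₂' : m₂ < (q : ℤ) ^ u)
    (hm₃ : (q : ℤ) ^ (u - 1) ≤ m₃) (hm₃' : m₃ < (q : ℤ) ^ u)
    (hm₁ : 1 ≤ m₁)
    (hm₁' : (m₁ : ℝ) < (q : ℝ) ^ u / ((h : ℝ) * q * (6 * q : ℝ) ^ h))
    (t : Polynomial ℤ)
    (ht : t = C m₃ * X ^ 3 + C m₂ * X ^ 2 - C m₁ * X + C m₀) :
    (∀ i : ℕ, i = 0 ∨ (2 ≤ i ∧ i ≤ 3 * h) → 0 < (t ^ h).coeff i) ∧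
    (t ^ h).coeff 1 < 0 := by
  have hL : (0 : ℤ) < q ^ (u - 1) := by positivity
  set s := C m₃ * X ^ 3 + C m₂ * X ^ 2 + C m₀
  have hs : ∀ i, 0 ≤ s.coeff i := fun i => by
    simp only [s, coeff_add, coeff_C_mul_X_pow, coeff_C]
    split_ifs <;> linarith
  have hs_coeff : s.coeff 0 = m₀ ∧ s.coeff 2 = m₂ ∧ s.coeff 3 = m₃ := by
    simp only [s, coeff_add, coeff_C_mul_X_pow, coeff_C]; norm_num
  have hs_eval : s.eval 1 = m₃ + m₂ + m₀ := by simp [s]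
  have herr : h * (s.eval 1 + m₁) ^ (h - 1) * m₁ < ((q : ℤ) ^ (u - 1)) ^ h :=
    natCast_mul_pow_mul_lt (by omega) hh hu (by omega) (by rw [hs_eval]; linarith)
      (by rw [hs_eval]; linarith) (by exact_mod_cast (lt_div_iff₀ (by positivity)).1 hm₁')
  have hts : t = s - C m₁ * X := by rw [ht]; ring
  have hmaj := majorizes_sub_C_mul_X_pow_sub_pow hs (by omega : (0 : ℤ) ≤ m₁) h
  rw [← hts] at hmaj
  refine ⟨fun i hi => ?_, ?_⟩
  · have hlow := pow_le_coeff_pow_of_le_coeff_zero_two_three hs hL.le (hs_coeff.1 ▸ hm₀)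
      (hs_coeff.2.1 ▸ hm₂) (hs_coeff.2.2 ▸ hm₃) h hi
    have hdiff := hmaj.abs_coeff_le_eval_one i
    simp only [coeff_sub, eval_mul, eval_pow, eval_add, eval_natCast, eval_C, eval_X,
      mul_one] at hdiff
    linarith [neg_abs_le ((t ^ h).coeff i - (s ^ h).coeff i)]
  · have ht_coeff : t.coeff 0 = m₀ ∧ t.coeff 1 = -m₁ := by
      simp only [ht, coeff_add, coeff_sub, coeff_C_mul_X_pow, coeff_C_mul_X, coeff_C]; norm_num
    rw [coeff_one_pow, ht_coeff.1, ht_coeff.2, mul_neg, neg_lt_zero]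
    exact mul_pos (mul_pos (by exact_mod_cast hh) (pow_pos (hL.trans_le hm₀) _)) (by omega)
end

section
/- Let q ≥ 2 and l ≥ 1 be integers and let m₀, m₁, m₂, m₃ be real numbers with 1 ≤ m₀, m₂, m₃ < q and 0 < m₁ < 1. Define r(x) = Σ_{j=1}^{l} C(l, j) (−m₁x)^j (m₃x³ + m₂x² + m₀)^(l−j), and let d_j denote the coefficient of x^j in r(x). Then |d_j| < l(6q)^l m₁ for every j with 1 ≤ j ≤ 3l − 2. -/
open Polynomial

lemma coeff_pow_nonneg' (p : Polynomial ℝ) (hp : ∀ k, 0 ≤ p.coeff k) (n : ℕ) :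
    ∀ k, 0 ≤ (p ^ n).coeff k := by
  induction n with
  | zero =>
      intro k
      simp [Polynomial.coeff_one]
      split <;> norm_num
  | succ n ih =>
      intro k
      rw [pow_succ, Polynomial.coeff_mul]
      exact Finset.sum_nonneg fun x _ => mul_nonneg (ih _) (hp _)

lemma coeff_le_eval_one' (p : Polynomial ℝ) (hp : ∀ k, 0 ≤ p.coeff k) (k : ℕ) :
    p.coeff k ≤ p.eval 1 := by
  rw [Polynomial.eval_eq_sum_range]
  by_cases hk : k < p.natDegree + 1
  · calc p.coeff k = p.coeff k * 1 ^ k := by ring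
    _ ≤ ∑ i ∈ Finset.range (p.natDegree + 1), p.coeff i * 1 ^ i :=
      Finset.single_le_sum (f := fun i => p.coeff i * 1 ^ i)
        (fun i _ => by simpa using hp i) (Finset.mem_range.mpr hk)
  · rw [Polynomial.coeff_eq_zero_of_natDegree_lt (by omega)]
    exact Finset.sum_nonneg fun i _ => by simpa using hp i

theorem remainder_coefficients_small
    (q l : ℕ) (hq : 2 ≤ q) (hl : 1 ≤ l)
    (m₀ m₁ m₂ m₃ : ℝ)
    (hm₀ : 1 ≤ m₀) (hm₀' : m₀ < q)
    (hm₂ : 1 ≤ m₂) (hm₂' : m₂ < q)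
    (hm₃ : 1 ≤ m₃) (hm₃' : m₃ < q)
    (hm₁ : 0 < m₁) (hm₁' : m₁ < 1)
    (r : Polynomial ℝ)
    (hr : r = ∑ j ∈ Finset.Icc 1 l,
        C ((l.choose j : ℝ)) * (-(C m₁) * X) ^ j *
          (C m₃ * X ^ 3 + C m₂ * X ^ 2 + C m₀) ^ (l - j)) :
    ∀ j : ℕ, 1 ≤ j → j ≤ 3 * l - 2 →
      |r.coeff j| < (l : ℝ) * (6 * q : ℝ) ^ l * m₁ := by
  intro k hk1 hk2
  have hq1 : (2 : ℝ) ≤ q := by exact_mod_cast hq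
  set P : Polynomial ℝ := C m₃ * X ^ 3 + C m₂ * X ^ 2 + C m₀ with hP
  have hPc : ∀ k, 0 ≤ P.coeff k := by
    intro k
    simp only [hP, coeff_add, coeff_C_mul, coeff_X_pow, coeff_C, mul_ite, mul_one, mul_zero]
    split_ifs <;> norm_num <;> nlinarith
  have hPeval : P.eval 1 = m₃ + m₂ + m₀ := by simp [hP]
  have hPeval_le : P.eval 1 ≤ 3 * q := by rw [hPeval]; linarith
  have hPeval_nonneg : 0 ≤ P.eval 1 := by rw [hPeval]; linarith
  -- bound each power's coefficients
  have hpow : ∀ n m : ℕ, (P ^ n).coeff m ≤ (3 * q : ℝ) ^ n := by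
    intro n m
    calc (P ^ n).coeff m ≤ (P ^ n).eval 1 :=
          coeff_le_eval_one' _ (coeff_pow_nonneg' P hPc n) m
      _ = (P.eval 1) ^ n := by rw [Polynomial.eval_pow]
      _ ≤ (3 * q : ℝ) ^ n := pow_le_pow_left₀ hPeval_nonneg hPeval_le n
  -- rewrite each term
  have hterm : ∀ j : ℕ,
      (C ((l.choose j : ℝ)) * (-(C m₁) * X) ^ j * P ^ (l - j)).coeff k
        = ((l.choose j : ℝ) * (-m₁) ^ j) *
            (if j ≤ k then (P ^ (l - j)).coeff (k - j) else 0) := by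
    intro j
    have : C ((l.choose j : ℝ)) * (-(C m₁) * X) ^ j * P ^ (l - j)
        = C ((l.choose j : ℝ) * (-m₁) ^ j) * (P ^ (l - j) * X ^ j) := by
      rw [map_mul, map_pow, map_neg]
      ring
    rw [this, coeff_C_mul, Polynomial.coeff_mul_X_pow']
  have habs : ∀ j ∈ Finset.Icc 1 l,
      |(C ((l.choose j : ℝ)) * (-(C m₁) * X) ^ j * P ^ (l - j)).coeff k|
        ≤ (l.choose j : ℝ) * m₁ * (3 * q : ℝ) ^ (l - j) := by
    intro j hj
    rw [Finset.mem_Icc] at hj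
    rw [hterm j, abs_mul, abs_mul, abs_pow, abs_neg,
      abs_of_pos hm₁, abs_of_nonneg (by positivity : (0:ℝ) ≤ (l.choose j : ℝ))]
    have h1 : m₁ ^ j ≤ m₁ := by
      calc m₁ ^ j ≤ m₁ ^ 1 := pow_le_pow_of_le_one hm₁.le hm₁'.le hj.1
        _ = m₁ := pow_one m₁
    have h2 : |if j ≤ k then (P ^ (l - j)).coeff (k - j) else 0| ≤ (3 * q : ℝ) ^ (l - j) := by
      split_ifs with h
      · rw [abs_of_nonneg (coeff_pow_nonneg' P hPc _ _)]
        exact hpow _ _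
      · rw [abs_zero]; positivity
    have hc : (0:ℝ) ≤ (l.choose j : ℝ) := by positivity
    have step1 : (l.choose j : ℝ) * m₁ ^ j * |if j ≤ k then (P ^ (l - j)).coeff (k - j) else 0|
        ≤ (l.choose j : ℝ) * m₁ ^ j * (3 * q : ℝ) ^ (l - j) :=
      mul_le_mul_of_nonneg_left h2 (by positivity)
    have step2 : (l.choose j : ℝ) * m₁ ^ j * (3 * q : ℝ) ^ (l - j)
        ≤ (l.choose j : ℝ) * m₁ * (3 * q : ℝ) ^ (l - j) := by
      have h3 : (l.choose j : ℝ) * m₁ ^ j ≤ (l.choose j : ℝ) * m₁ :=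
        mul_le_mul_of_nonneg_left h1 hc
      exact mul_le_mul_of_nonneg_right h3 (by positivity)
    exact step1.trans step2
  -- sum bound
  have hsum1 : |r.coeff k| ≤ ∑ j ∈ Finset.Icc 1 l, (l.choose j : ℝ) * m₁ * (3 * q : ℝ) ^ (l - j) := by
    rw [hr, Polynomial.finset_sum_coeff]
    exact le_trans (Finset.abs_sum_le_sum_abs _ _) (Finset.sum_le_sum habs)
  -- binomial
  have hbin : ∑ j ∈ Finset.range (l + 1), (l.choose j : ℝ) * (3 * q : ℝ) ^ (l - j)
      = ((1 : ℝ) + 3 * q) ^ l := by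
    rw [add_pow]
    apply Finset.sum_congr rfl
    intro j hj
    ring
  have hsplit : ∑ j ∈ Finset.range (l + 1), (l.choose j : ℝ) * (3 * q : ℝ) ^ (l - j)
      = (3 * q : ℝ) ^ l + ∑ j ∈ Finset.Icc 1 l, (l.choose j : ℝ) * (3 * q : ℝ) ^ (l - j) := by
    rw [Finset.range_eq_Ico, Finset.sum_eq_sum_Ico_succ_bot (by omega)]
    simp [Finset.Ico_add_one_right_eq_Icc]
  have hIcc : ∑ j ∈ Finset.Icc 1 l, (l.choose j : ℝ) * (3 * q : ℝ) ^ (l - j)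
      = ((1 : ℝ) + 3 * q) ^ l - (3 * q : ℝ) ^ l := by
    rw [← hbin, hsplit]; ring
  have hsum2 : ∑ j ∈ Finset.Icc 1 l, (l.choose j : ℝ) * m₁ * (3 * q : ℝ) ^ (l - j)
      = m₁ * (((1 : ℝ) + 3 * q) ^ l - (3 * q : ℝ) ^ l) := by
    rw [← hIcc, Finset.mul_sum]
    apply Finset.sum_congr rfl
    intro j hj
    ring
  have h6 : ((1 : ℝ) + 3 * q) ^ l ≤ (6 * q : ℝ) ^ l := by
    apply pow_le_pow_left₀ (by linarith) (by linarith)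
  have h3 : (0 : ℝ) < (3 * q : ℝ) ^ l := by positivity
  have hl1 : (1 : ℝ) ≤ (l : ℝ) := by exact_mod_cast hl
  have h6pos : (0 : ℝ) < (6 * q : ℝ) ^ l := by positivity
  calc |r.coeff k| ≤ m₁ * (((1 : ℝ) + 3 * q) ^ l - (3 * q : ℝ) ^ l) := by
        rw [← hsum2]; exact hsum1
    _ < m₁ * (6 * q : ℝ) ^ l := by nlinarith
    _ ≤ (l : ℝ) * (6 * q : ℝ) ^ l * m₁ := by
        nlinarith [mul_le_mul_of_nonneg_right
          (mul_le_mul_of_nonneg_right hl1 h6pos.le) hm₁.le]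
end
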